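/- arXiv:2603.25466 — 3 statements merged into one kernel-verified Lean document; each statement's English description precedes it below -/
import Mathlib

section
/- Let O(f) = (1/m)(L(f) + Φ(f)) be convex on ℝ^m with L differentiable and Φ convex, let f† minimize O, and let f̂ satisfy the fixed point relation f̂ = Prox_η(f̂ − η Ĝ(f̂)) for some η > 0 and map Ĝ: ℝ^m → ℝ^m. Then O(f̂) − O(f†) ≤ (1/m)⟨f̂ − f†, ∇L(f̂) − Ĝ(f̂)⟩. -/
/-!
Convexity of `L` gives `L f̂ + ⟪∇L f̂, f† - f̂⟫ ≤ L f†`. The fixed-point relation says that `f̂` minimizes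
the proximal objective `x ↦ ‖(f̂ - η Ĝ f̂) - x‖² / (2η) + Φ x`, and the first-order optimality condition
of that problem makes `-Ĝ f̂` a subgradient of `Φ` at `f̂`: `Φ f̂ - ⟪Ĝ f̂, f† - f̂⟫ ≤ Φ f†`. Adding the two
inequalities and scaling by `1/m` gives the bound. Both first-order inequalities are proved on the
segment from the base point, where a suitable function of `t ∈ [0, 1]` is minimal at `t = 0`.
-/

open Set
open scoped RealInnerProductSpace

theorem IsMinOn.nonneg_of_hasDerivAt_Icc {φ : ℝ → ℝ} {a b d : ℝ} (hab : a < b)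
    (hmin : IsMinOn φ (Icc a b) a) (hφ : HasDerivAt φ d a) : 0 ≤ d := by
  have hcone : b - a ∈ posTangentConeAt (Icc a b) a :=
    mem_posTangentConeAt_of_segment_subset (by simp [segment_eq_Icc hab.le])
  have := hmin.localize.hasFDerivWithinAt_nonneg hφ.hasFDerivAt.hasFDerivWithinAt hcone
  rw [ContinuousLinearMap.toSpanSingleton_apply, smul_eq_mul] at this
  exact nonneg_of_mul_nonneg_right this (sub_pos.2 hab)

section InnerProductSpace

variable {E : Type*} [NormedAddCommGroup E] [InnerProductSpace ℝ E] [CompleteSpace E]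

theorem HasGradientAt.hasDerivAt_comp_add_smul {f : E → ℝ} {g x : E} (hf : HasGradientAt f g x)
    (v : E) : HasDerivAt (fun t : ℝ => f (x + t • v)) ⟪g, v⟫ 0 := by
  have hline : HasDerivAt (fun t : ℝ => x + t • v) v 0 := by
    simpa using ((hasDerivAt_id (0 : ℝ)).smul_const v).const_add x
  have := hf.hasFDerivAt.comp_hasDerivAt_of_eq (0 : ℝ) hline (by simp)
  rwa [InnerProductSpace.toDual_apply_apply] at this

theorem hasGradientAt_norm_sub_sq (η : ℝ) (u p : E) :
    HasGradientAt (fun x => 1 / (2 * η) * ‖u - x‖ ^ 2) (η⁻¹ • (p - u)) p := by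
  rw [hasGradientAt_iff_hasFDerivAt]
  refine (((hasFDerivAt_id p).const_sub u).norm_sq.const_mul (1 / (2 * η))).congr_fderiv ?_
  ext v
  simp
  ring

theorem ConvexOn.add_inner_le_of_hasGradientAt {L : E → ℝ} (hL : ConvexOn ℝ univ L) {g x : E}
    (hg : HasGradientAt L g x) (y : E) : L x + ⟪g, y - x⟫ ≤ L y := by
  have hmin : IsMinOn (fun t : ℝ => (1 - t) * L x + t * L y - L (x + t • (y - x))) (Icc 0 1) 0 := by
    intro t ⟨ht0, ht1⟩
    have := hL.2 (mem_univ x) (mem_univ y) (sub_nonneg.2 ht1) ht0 (by ring)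
    rw [show (1 - t) • x + t • y = x + t • (y - x) by module] at this
    simpa using this
  have hderiv : HasDerivAt (fun t : ℝ => (1 - t) * L x + t * L y - L (x + t • (y - x)))
      (L y - L x - ⟪g, y - x⟫) 0 := by
    have h1 := (((hasDerivAt_id (0 : ℝ)).const_sub 1).mul_const (L x)).add
      ((hasDerivAt_id (0 : ℝ)).mul_const (L y))
    exact (h1.sub (hg.hasDerivAt_comp_add_smul (y - x))).congr_deriv (by ring)
  linarith [hmin.nonneg_of_hasDerivAt_Icc zero_lt_one hderiv]

theorem ConvexOn.sub_inner_le_of_isMinOn_add {Φ q : E → ℝ} (hΦ : ConvexOn ℝ univ Φ) {d p : E}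
    (hq : HasGradientAt q d p) (hmin : IsMinOn (fun x => q x + Φ x) univ p) (y : E) :
    Φ p - ⟪d, y - p⟫ ≤ Φ y := by
  have hmin' : IsMinOn (fun t : ℝ => q (p + t • (y - p)) + t * (Φ y - Φ p)) (Icc 0 1) 0 := by
    intro t ⟨ht0, ht1⟩
    have hc := hΦ.2 (mem_univ p) (mem_univ y) (sub_nonneg.2 ht1) ht0 (by ring)
    rw [show (1 - t) • p + t • y = p + t • (y - p) by module] at hc
    have hm : q p + Φ p ≤ q (p + t • (y - p)) + Φ (p + t • (y - p)) := hmin (mem_univ _)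
    simp only [smul_eq_mul] at hc
    simp only [mem_ofPred_eq, zero_smul, add_zero, zero_mul]
    linarith
  have hderiv : HasDerivAt (fun t : ℝ => q (p + t • (y - p)) + t * (Φ y - Φ p))
      (⟪d, y - p⟫ + (Φ y - Φ p)) 0 :=
    ((hq.hasDerivAt_comp_add_smul (y - p)).add
      ((hasDerivAt_id (0 : ℝ)).mul_const (Φ y - Φ p))).congr_deriv (by ring)
  linarith [hmin'.nonneg_of_hasDerivAt_Icc zero_lt_one hderiv]

theorem ConvexOn.add_inner_le_of_isMinOn_prox {Φ : E → ℝ} (hΦ : ConvexOn ℝ univ Φ) {η : ℝ}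
    {u p : E} (hp : IsMinOn (fun x => 1 / (2 * η) * ‖u - x‖ ^ 2 + Φ x) univ p) (y : E) :
    Φ p + ⟪η⁻¹ • (u - p), y - p⟫ ≤ Φ y := by
  have h := hΦ.sub_inner_le_of_isMinOn_add (hasGradientAt_norm_sub_sq η u p) hp y
  rw [show η⁻¹ • (p - u) = -(η⁻¹ • (u - p)) by module, inner_neg_left] at h
  linarith

end InnerProductSpace

theorem rat_excess_risk_bound_general (m : ℕ)
    (L Φ : EuclideanSpace ℝ (Fin m) → ℝ)
    (gradL Ghat : EuclideanSpace ℝ (Fin m) → EuclideanSpace ℝ (Fin m))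
    (hL : ConvexOn ℝ Set.univ L)
    (hGL : ∀ f, HasGradientAt L (gradL f) f)
    (hΦ : ConvexOn ℝ Set.univ Φ)
    (O : EuclideanSpace ℝ (Fin m) → ℝ)
    (hO : ∀ f, O f = (1 / (m : ℝ)) * (L f + Φ f))
    (fdag : EuclideanSpace ℝ (Fin m))
    (η : ℝ) (hη : 0 < η)
    (P : EuclideanSpace ℝ (Fin m) → EuclideanSpace ℝ (Fin m))
    (hP : ∀ u f, 1 / (2 * η) * ‖u - P u‖ ^ 2 + Φ (P u)
        ≤ 1 / (2 * η) * ‖u - f‖ ^ 2 + Φ f)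
    (fhat : EuclideanSpace ℝ (Fin m))
    (hfix : fhat = P (fhat - η • Ghat fhat)) :
    O fhat - O fdag ≤ (1 / (m : ℝ)) * (inner ℝ (fhat - fdag) (gradL fhat - Ghat fhat) : ℝ) := by
  have hLfd : L fhat + ⟪gradL fhat, fdag - fhat⟫ ≤ L fdag :=
    hL.add_inner_le_of_hasGradientAt (hGL fhat) fdag
  have hΦfd : Φ fhat - ⟪Ghat fhat, fdag - fhat⟫ ≤ Φ fdag := by
    have h := hΦ.add_inner_le_of_isMinOn_prox (fun f _ => hP (fhat - η • Ghat fhat) f) fdag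
    rwa [← hfix, sub_sub_cancel_left, smul_neg, inv_smul_smul₀ hη.ne', inner_neg_left,
      ← sub_eq_add_neg] at h
  have hsum : L fhat + Φ fhat - (L fdag + Φ fdag) ≤ ⟪fhat - fdag, gradL fhat - Ghat fhat⟫ := by
    have : ⟪fhat - fdag, gradL fhat - Ghat fhat⟫
        = ⟪Ghat fhat, fdag - fhat⟫ - ⟪gradL fhat, fdag - fhat⟫ := by
      rw [← neg_sub fdag fhat, inner_neg_left, inner_sub_right, real_inner_comm _ (gradL fhat),
        real_inner_comm _ (Ghat fhat)]
      ring
    linarith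
  rw [hO, hO, ← mul_sub]
  exact mul_le_mul_of_nonneg_left hsum (by positivity)

/-- Excess risk bound for any fixed point of the approximate proximal gradient update. -/
theorem rat_excess_risk_bound (m : ℕ) (hm : 0 < m)
    (L Φ : EuclideanSpace ℝ (Fin m) → ℝ)
    (gradL Ghat : EuclideanSpace ℝ (Fin m) → EuclideanSpace ℝ (Fin m))
    (hL : ConvexOn ℝ Set.univ L)
    (hGL : ∀ f, HasGradientAt L (gradL f) f)
    (hΦ : ConvexOn ℝ Set.univ Φ)
    (O : EuclideanSpace ℝ (Fin m) → ℝ)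
    (hO : ∀ f, O f = (1 / (m : ℝ)) * (L f + Φ f))
    (fdag : EuclideanSpace ℝ (Fin m)) (hfdag : ∀ f, O fdag ≤ O f)
    (η : ℝ) (hη : 0 < η)
    (P : EuclideanSpace ℝ (Fin m) → EuclideanSpace ℝ (Fin m))
    (hP : ∀ u f, 1 / (2 * η) * ‖u - P u‖ ^ 2 + Φ (P u)
        ≤ 1 / (2 * η) * ‖u - f‖ ^ 2 + Φ f)
    (fhat : EuclideanSpace ℝ (Fin m))
    (hfix : fhat = P (fhat - η • Ghat fhat)) :
    O fhat - O fdag ≤ (1 / (m : ℝ)) * (inner ℝ (fhat - fdag) (gradL fhat - Ghat fhat) : ℝ) :=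
  rat_excess_risk_bound_general m L Φ gradL Ghat hL hGL hΦ O hO fdag η hη P hP fhat hfix
end

section
/- Let L be ν-strongly convex and differentiable, Φ convex, and f† the minimizer of L + Φ. For any f^k, define f^{k+1} = Prox_η(f^k − η Ĝ(f^k)) and the defect D(f^k) = f^{k+1} − f^k. Then ‖f^{k+1} − f†‖₂² ≤ (1/ν)⟨f^{k+1} − f†, ∇L(f^{k+1}) − Ĝ(f^k) − (1/η)D(f^k)⟩. -/
/-!
Strong convexity of `L` gives the gradient inequality at `f^{k+1}`, and strong convexity of
`L + Φ` gives quadratic growth away from its minimizer `f†`; together they bound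
`ν ‖f^{k+1} - f†‖²` by `⟪∇L(f^{k+1}), f^{k+1} - f†⟫ + Φ(f^{k+1}) - Φ(f†)`. The prox objective
`‖u - ·‖² / (2η) + Φ` is `1/η`-strongly convex, so quadratic growth at its minimizer `f^{k+1}`
bounds `Φ(f^{k+1}) - Φ(f†)` by `⟪u - f^{k+1}, f^{k+1} - f†⟫ / η`, where `u = f^k - η Ĝ(f^k)` and
`(u - f^{k+1}) / η = -Ĝ(f^k) - D(f^k) / η`.
-/

open Set Filter Topology

lemma le_of_forall_mem_Ioo_le_add_mul {a b c : ℝ} (h : ∀ t ∈ Ioo (0 : ℝ) 1, a ≤ b + t * c) :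
    a ≤ b := by
  have hlim : Tendsto (fun t : ℝ => b + t * c) (𝓝[>] 0) (𝓝 b) :=
    ((show Continuous fun t : ℝ => b + t * c by fun_prop).tendsto' 0 b (by simp)).mono_left
      nhdsWithin_le_nhds
  exact ge_of_tendsto hlim (eventually_of_mem (Ioo_mem_nhdsGT zero_lt_one) h)

section NormedSpace

variable {E : Type*} [NormedAddCommGroup E] [NormedSpace ℝ E]

lemma ConvexOn.add_le_of_hasFDerivAt {f : E → ℝ} {f' : E →L[ℝ] ℝ} {x : E}
    (hf : ConvexOn ℝ univ f) (hf' : HasFDerivAt f f' x) (y : E) :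
    f x + f' (y - x) ≤ f y := by
  have hline : HasDerivAt (f ∘ AffineMap.lineMap (k := ℝ) x y) (f' (y - x)) 0 :=
    hf'.comp_hasDerivAt_of_eq 0 AffineMap.hasDerivAt_lineMap (by simp)
  have := (hf.comp_affineMap (AffineMap.lineMap x y)).le_slope_of_hasDerivAt
    trivial trivial zero_lt_one hline
  simp only [slope, Function.comp_apply, AffineMap.lineMap_apply_one, AffineMap.lineMap_apply_zero,
    vsub_eq_sub, sub_zero, inv_one, smul_eq_mul, one_mul] at this
  linarith

lemma StrongConvexOn.add_convexOn {s : Set E} {m : ℝ} {f g : E → ℝ}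
    (hf : StrongConvexOn s m f) (hg : ConvexOn ℝ s g) : StrongConvexOn s m (f + g) := by
  have := hf.add (uniformConvexOn_zero.2 hg)
  rwa [add_zero] at this

lemma StrongConvexOn.add_mul_norm_sub_sq_le_of_isMinOn {s : Set E} {m : ℝ} {f : E → ℝ} {x y : E}
    (hf : StrongConvexOn s m f) (hmin : IsMinOn f s x) (hx : x ∈ s) (hy : y ∈ s) :
    f x + m / 2 * ‖y - x‖ ^ 2 ≤ f y := by
  suffices ∀ t ∈ Ioo (0 : ℝ) 1, m / 2 * ‖y - x‖ ^ 2 ≤ f y - f x + t * (m / 2 * ‖y - x‖ ^ 2) by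
    linarith [le_of_forall_mem_Ioo_le_add_mul this]
  intro t ⟨ht0, ht1⟩
  have hconv := hf.2 hy hx ht0.le (sub_nonneg.2 ht1.le) (add_sub_cancel t 1)
  have hmin := hmin (hf.1 hy hx ht0.le (sub_nonneg.2 ht1.le) (add_sub_cancel t 1))
  simp only [smul_eq_mul, mem_ofPred_eq] at hconv hmin
  have : t * ((1 - t) * (m / 2 * ‖y - x‖ ^ 2)) ≤ t * (f y - f x) := by linarith
  linarith [le_of_mul_le_mul_left this ht0]

end NormedSpace

section InnerProductSpace

variable {E : Type*} [NormedAddCommGroup E] [InnerProductSpace ℝ E]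

lemma StrongConvexOn.add_add_mul_norm_sub_sq_le_of_hasFDerivAt {m : ℝ} {f : E → ℝ}
    {f' : E →L[ℝ] ℝ} {x : E} (hf : StrongConvexOn univ m f) (hf' : HasFDerivAt f f' x) (y : E) :
    f x + f' (y - x) + m / 2 * ‖y - x‖ ^ 2 ≤ f y := by
  have hsq : HasFDerivAt (fun z => m / 2 * ‖z‖ ^ 2) ((m / 2) • 2 • innerSL ℝ x) x :=
    (hasStrictFDerivAt_norm_sq x).hasFDerivAt.const_mul (m / 2)
  have := (strongConvexOn_iff_convex.1 hf).add_le_of_hasFDerivAt (hf'.sub hsq) y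
  have hexp : ‖y‖ ^ 2 = ‖x‖ ^ 2 + 2 * inner ℝ x (y - x) + ‖y - x‖ ^ 2 := by
    rw [← norm_add_sq_real, add_sub_cancel]
  simp only [sub_apply, smul_apply, coe_innerSL_apply, nsmul_eq_mul, Nat.cast_ofNat,
    smul_eq_mul] at this
  rw [hexp] at this
  linarith

lemma strongConvexOn_mul_norm_sub_sq (c : ℝ) (u : E) :
    StrongConvexOn univ (2 * c) fun f => c * ‖u - f‖ ^ 2 := by
  rw [strongConvexOn_iff_convex]
  have hexp : ∀ f : E, c * ‖u - f‖ ^ 2 - 2 * c / 2 * ‖f‖ ^ 2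
      = c * ‖u‖ ^ 2 + (-2 * c) * inner ℝ u f := by
    intro f
    rw [norm_sub_sq_real]
    ring
  simp only [hexp]
  exact (convexOn_const _ convex_univ).add
    (LinearMap.convexOn ((-2 * c) • innerₛₗ ℝ u) convex_univ)

lemma ConvexOn.sub_le_inner_of_isMinOn_prox {Φ : E → ℝ} (hΦ : ConvexOn ℝ univ Φ) {η : ℝ}
    {u p : E} (hp : IsMinOn (fun f => 1 / (2 * η) * ‖u - f‖ ^ 2 + Φ f) univ p) (z : E) :
    Φ p - Φ z ≤ 1 / η * inner ℝ (u - p) (p - z) := by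
  have hsc : StrongConvexOn univ (1 / η) fun f => 1 / (2 * η) * ‖u - f‖ ^ 2 + Φ f := by
    have := (strongConvexOn_mul_norm_sub_sq (1 / (2 * η)) u).add_convexOn hΦ
    rwa [show 2 * (1 / (2 * η)) = 1 / η by field_simp] at this
  have := hsc.add_mul_norm_sub_sq_le_of_isMinOn hp trivial (mem_univ z)
  have hexp : u - z = (u - p) + (p - z) := by abel
  rw [hexp, norm_add_sq_real, norm_sub_rev z p] at this
  linear_combination this

lemma StrongConvexOn.mul_norm_sub_sq_le_of_isMinOn_add {ν : ℝ} {L Φ : E → ℝ} {L' : E →L[ℝ] ℝ}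
    {p x : E} (hL : StrongConvexOn univ ν L) (hL' : HasFDerivAt L L' p)
    (hΦ : ConvexOn ℝ univ Φ) (hmin : IsMinOn (L + Φ) univ x) :
    ν * ‖p - x‖ ^ 2 ≤ L' (p - x) + Φ p - Φ x := by
  have hgrad := hL.add_add_mul_norm_sub_sq_le_of_hasFDerivAt hL' x
  have hgrowth := (hL.add_convexOn hΦ).add_mul_norm_sub_sq_le_of_isMinOn hmin trivial (mem_univ p)
  rw [norm_sub_rev, ← neg_sub, map_neg] at hgrad
  simp only [Pi.add_apply] at hgrowth
  linarith

end InnerProductSpace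

/-- One-step estimation error bound with the proximal operator defect term. -/
theorem rat_one_step_bound (m : ℕ)
    (L Φ : EuclideanSpace ℝ (Fin m) → ℝ) (ν : ℝ) (hν : 0 < ν)
    (hL : StrongConvexOn Set.univ ν L)
    (gradL Ghat : EuclideanSpace ℝ (Fin m) → EuclideanSpace ℝ (Fin m))
    (hgradL : ∀ f, HasGradientAt L (gradL f) f)
    (hΦ : ConvexOn ℝ Set.univ Φ)
    (fdag : EuclideanSpace ℝ (Fin m))
    (hfdag : ∀ f, L fdag + Φ fdag ≤ L f + Φ f)
    (η : ℝ) (hη : 0 < η)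
    (P : EuclideanSpace ℝ (Fin m) → EuclideanSpace ℝ (Fin m))
    (hP : ∀ u f, 1 / (2 * η) * ‖u - P u‖ ^ 2 + Φ (P u)
        ≤ 1 / (2 * η) * ‖u - f‖ ^ 2 + Φ f)
    (fk fk1 : EuclideanSpace ℝ (Fin m))
    (hfk1 : fk1 = P (fk - η • Ghat fk)) :
    ‖fk1 - fdag‖ ^ 2
      ≤ (1 / ν) * (inner ℝ (fk1 - fdag)
          (gradL fk1 - Ghat fk - (1 / η) • (fk1 - fk)) : ℝ) := by
  set u := fk - η • Ghat fk
  have hprox := hΦ.sub_le_inner_of_isMinOn_prox (p := fk1) (fun f _ => hfk1 ▸ hP u f) fdag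
  have hstrong :=
    hL.mul_norm_sub_sq_le_of_isMinOn_add (hgradL fk1).hasFDerivAt hΦ (fun f _ => hfdag f)
  have hdefect : gradL fk1 - Ghat fk - (1 / η) • (fk1 - fk) = gradL fk1 + (1 / η) • (u - fk1) := by
    simp only [u, smul_sub, smul_smul, one_div_mul_cancel hη.ne']
    module
  rw [hdefect, inner_add_right, real_inner_smul_right, one_div_mul_eq_div, le_div_iff₀ hν,
    real_inner_comm (u - fk1), real_inner_comm (gradL fk1)]
  rw [InnerProductSpace.toDual_apply_apply] at hstrong
  linarith
end

section
/- Suppose Ĝ: ℝ^m → ℝ^m satisfies the approximate co-coercivity ⟨f − f̂, Ĝ(f) − Ĝ(f̂)⟩ ≥ (1/ℓ)‖Ĝ(f) − Ĝ(f̂)‖₂² − (1/ℓ)ε² for all f, where f̂ is a fixed point of the map T(f) = Prox_η(f − η Ĝ(f)) with η = 1/ℓ and Prox_η the proximal operator of a convex function. Then the Picard iterates f^{k+1} = T(f^k) satisfy min_{0 ≤ k ≤ K} ‖T(f^k) − f^k‖₂² ≤ (2/(K+1))‖f^0 − f̂‖₂² + 4ε²/ℓ². -/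
/-!
Write `p = T f - f̂`, `a = f - f̂` and `b = Ĝ f - Ĝ f̂`. Firm nonexpansiveness of the proximal
map gives `‖p‖² ≤ ⟪a - η b, p⟫`; approximate co-coercivity together with Young's inequality
absorbs the gradient term up to `η² ε²`, which yields the approximate Fejér inequality
`‖T f - f̂‖² ≤ ‖f - f̂‖² - ‖T f - f‖² / 2 + 2 η² ε²`. Telescoping it along the Picard iterates
bounds the sum of the first `K + 1` defects, and the smallest one is at most their mean.
-/

open Set Filter Topology Finset
open scoped RealInnerProductSpace

section Proximal

variable {E : Type*} [NormedAddCommGroup E] [InnerProductSpace ℝ E]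

def IsProximalMap (Φ : E → ℝ) (η : ℝ) (P : E → E) : Prop :=
  ∀ u x, 1 / (2 * η) * ‖u - P u‖ ^ 2 + Φ (P u) ≤ 1 / (2 * η) * ‖u - x‖ ^ 2 + Φ x

variable {Φ : E → ℝ} {η : ℝ} {P : E → E}

/-- The optimality condition `(u - P u) / η ∈ ∂Φ (P u)` of the proximal map. -/
theorem IsProximalMap.mul_sub_le_inner (hP : IsProximalMap Φ η P) (hΦ : ConvexOn ℝ univ Φ)
    (hη : 0 < η) (u q : E) :
    η * (Φ (P u) - Φ q) ≤ ⟪u - P u, P u - q⟫ := by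
  set p := P u
  have along_segment : ∀ t ∈ Ioc (0 : ℝ) 1,
      η * (Φ p - Φ q) ≤ ⟪u - p, p - q⟫ + t * (‖p - q‖ ^ 2 / 2) := by
    rintro t ⟨ht0, ht1⟩
    have hconv := hΦ.2 (mem_univ p) (mem_univ q) (sub_nonneg.2 ht1) ht0.le (sub_add_cancel 1 t)
    have hmin : 1 / (2 * η) * ‖u - p‖ ^ 2 + Φ p
        ≤ 1 / (2 * η) * ‖u - ((1 - t) • p + t • q)‖ ^ 2 + Φ ((1 - t) • p + t • q) :=
      hP u _
    have hdiff : u - ((1 - t) • p + t • q) = (u - p) + t • (p - q) := by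
      rw [sub_smul, one_smul, smul_sub]; abel
    rw [hdiff, norm_add_sq_real, inner_smul_right, norm_smul, Real.norm_of_nonneg ht0.le] at hmin
    simp only [smul_eq_mul] at hconv
    rw [mul_pow] at hmin
    have hgain : t * (Φ p - Φ q)
        ≤ 1 / (2 * η) * (2 * (t * ⟪u - p, p - q⟫) + t ^ 2 * ‖p - q‖ ^ 2) := by
      linarith
    have hscale : η * (1 / (2 * η) * (2 * (t * ⟪u - p, p - q⟫) + t ^ 2 * ‖p - q‖ ^ 2))
        = t * (⟪u - p, p - q⟫ + t * (‖p - q‖ ^ 2 / 2)) := by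
      field_simp
    have := mul_le_mul_of_nonneg_left hgain hη.le
    rw [hscale] at this
    exact le_of_mul_le_mul_left (by linarith) ht0
  have hlim : Tendsto (fun t : ℝ => ⟪u - p, p - q⟫ + t * (‖p - q‖ ^ 2 / 2)) (𝓝[>] 0)
      (𝓝 ⟪u - p, p - q⟫) := by
    refine tendsto_nhdsWithin_of_tendsto_nhds ?_
    have hcont : Continuous fun t : ℝ => ⟪u - p, p - q⟫ + t * (‖p - q‖ ^ 2 / 2) := by fun_prop
    simpa using hcont.tendsto 0
  exact ge_of_tendsto hlim (eventually_of_mem (Ioc_mem_nhdsGT one_pos) along_segment)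

theorem IsProximalMap.norm_sub_sq_le_inner (hP : IsProximalMap Φ η P) (hΦ : ConvexOn ℝ univ Φ)
    (hη : 0 < η) (u v : E) :
    ‖P u - P v‖ ^ 2 ≤ ⟪u - v, P u - P v⟫ := by
  have hu := hP.mul_sub_le_inner hΦ hη u (P v)
  have hv := hP.mul_sub_le_inner hΦ hη v (P u)
  rw [← neg_sub (P u) (P v), inner_neg_right] at hv
  have hsum : ⟪u - P u, P u - P v⟫ - ⟪v - P v, P u - P v⟫
      = ⟪u - v, P u - P v⟫ - ‖P u - P v‖ ^ 2 := by
    rw [← inner_sub_left, ← real_inner_self_eq_norm_sq, ← inner_sub_left]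
    congr 1; abel
  linarith

theorem IsProximalMap.norm_step_sub_sq_le (hP : IsProximalMap Φ η P) (hΦ : ConvexOn ℝ univ Φ)
    (hη : 0 < η) {G : E → E} {fhat : E} {ε : ℝ} (hfix : P (fhat - η • G fhat) = fhat)
    (hco : ∀ f, η * ‖G f - G fhat‖ ^ 2 - η * ε ^ 2 ≤ ⟪f - fhat, G f - G fhat⟫) (f : E) :
    ‖P (f - η • G f) - fhat‖ ^ 2
      ≤ ‖f - fhat‖ ^ 2 - ‖P (f - η • G f) - f‖ ^ 2 / 2 + 2 * η ^ 2 * ε ^ 2 := by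
  set p := P (f - η • G f) - fhat
  set a := f - fhat
  set b := G f - G fhat
  have hdefect : P (f - η • G f) - f = p - a := by simp only [p, a]; abel
  have hfirm : ‖p‖ ^ 2 ≤ ⟪a, p⟫ - η * ⟪b, p⟫ := by
    have h := hP.norm_sub_sq_le_inner hΦ hη (f - η • G f) (fhat - η • G fhat)
    have hdiff : f - η • G f - (fhat - η • G fhat) = a - η • b := by
      simp only [a, b, smul_sub]; abel
    rwa [hfix, hdiff, inner_sub_left, real_inner_smul_left] at h
  have hyoung : -(η * ⟪b, p - a⟫) ≤ η ^ 2 * ‖b‖ ^ 2 + ‖p - a‖ ^ 2 / 4 := by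
    have hcs := neg_le_of_abs_le (abs_real_inner_le_norm b (p - a))
    nlinarith [sq_nonneg (η * ‖b‖ - ‖p - a‖ / 2)]
  have hco' : η * (η * ‖b‖ ^ 2 - η * ε ^ 2) ≤ η * ⟪a, b⟫ :=
    mul_le_mul_of_nonneg_left (hco f) hη.le
  have hpolar : ‖p - a‖ ^ 2 = ‖p‖ ^ 2 - 2 * ⟪a, p⟫ + ‖a‖ ^ 2 := by
    rw [norm_sub_sq_real, real_inner_comm]
  rw [inner_sub_right, real_inner_comm a b] at hyoung
  rw [hdefect]
  linarith

end Proximal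

theorem exists_le_of_forall_le_sub_add {r d : ℕ → ℝ} {c : ℝ} (hr : ∀ k, 0 ≤ r k)
    (h : ∀ k, r (k + 1) ≤ r k - d k / 2 + c) (K : ℕ) :
    ∃ k ≤ K, d k ≤ 2 / ((K : ℝ) + 1) * r 0 + 2 * c := by
  have htelescope : ∀ n, ∑ k ∈ range n, d k ≤ 2 * (r 0 - r n) + 2 * n * c := by
    intro n
    induction n with
    | zero => simp
    | succ n ih => rw [sum_range_succ]; push_cast; linarith [h n]
  have hsum : ∑ k ∈ range (K + 1), d k
      ≤ ∑ _k ∈ range (K + 1), (2 / ((K : ℝ) + 1) * r 0 + 2 * c) := by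
    rw [sum_const, card_range, nsmul_eq_mul]
    have := htelescope (K + 1)
    push_cast at this ⊢
    field_simp
    linarith [hr (K + 1)]
  obtain ⟨k, hk, hdk⟩ := exists_le_of_sum_le nonempty_range_add_one hsum
  exact ⟨k, Nat.lt_succ_iff.1 (mem_range.1 hk), hdk⟩

theorem picard_defect_sublinear_general (m : ℕ)
    (Φ : EuclideanSpace ℝ (Fin m) → ℝ)
    (hΦ : ConvexOn ℝ Set.univ Φ)
    (G : EuclideanSpace ℝ (Fin m) → EuclideanSpace ℝ (Fin m))
    (ℓ ε : ℝ) (hℓ : 0 < ℓ) (η : ℝ) (hηdef : η = 1 / ℓ)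
    (P : EuclideanSpace ℝ (Fin m) → EuclideanSpace ℝ (Fin m))
    (hP : ∀ u f, 1 / (2 * η) * ‖u - P u‖ ^ 2 + Φ (P u)
        ≤ 1 / (2 * η) * ‖u - f‖ ^ 2 + Φ f)
    (fhat : EuclideanSpace ℝ (Fin m))
    (hfix : P (fhat - η • G fhat) = fhat)
    (hco : ∀ f, (1 / ℓ) * ‖G f - G fhat‖ ^ 2 - (1 / ℓ) * ε ^ 2
        ≤ (inner ℝ (f - fhat) (G f - G fhat) : ℝ))
    (seq : ℕ → EuclideanSpace ℝ (Fin m))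
    (hseq : ∀ k, seq (k + 1) = P (seq k - η • G (seq k))) :
    ∀ K : ℕ, ∃ k ≤ K,
      ‖P (seq k - η • G (seq k)) - seq k‖ ^ 2
        ≤ 2 / ((K : ℝ) + 1) * ‖seq 0 - fhat‖ ^ 2 + 4 * ε ^ 2 / ℓ ^ 2 := by
  subst hηdef
  intro K
  have hfejer (k : ℕ) := (show IsProximalMap Φ (1 / ℓ) P from hP).norm_step_sub_sq_le hΦ
    (one_div_pos.2 hℓ) hfix hco (seq k)
  simp only [← hseq] at hfejer
  obtain ⟨k, hk, hdefect⟩ := exists_le_of_forall_le_sub_add (fun k => sq_nonneg ‖seq k - fhat‖)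
    hfejer K
  refine ⟨k, hk, ?_⟩
  rw [← hseq]
  convert hdefect using 2
  field_simp
  ring

/-- Sublinear convergence of the defect along Picard iterates of the approximate
proximal gradient update, under approximate co-coercivity at a fixed point. -/
theorem picard_defect_sublinear (m : ℕ)
    (Φ : EuclideanSpace ℝ (Fin m) → ℝ)
    (hΦ : ConvexOn ℝ Set.univ Φ)
    (G : EuclideanSpace ℝ (Fin m) → EuclideanSpace ℝ (Fin m))
    (ℓ ε : ℝ) (hℓ : 0 < ℓ) (hε : 0 ≤ ε) (η : ℝ) (hηdef : η = 1 / ℓ)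
    (P : EuclideanSpace ℝ (Fin m) → EuclideanSpace ℝ (Fin m))
    (hP : ∀ u f, 1 / (2 * η) * ‖u - P u‖ ^ 2 + Φ (P u)
        ≤ 1 / (2 * η) * ‖u - f‖ ^ 2 + Φ f)
    (fhat : EuclideanSpace ℝ (Fin m))
    (hfix : P (fhat - η • G fhat) = fhat)
    (hco : ∀ f, (1 / ℓ) * ‖G f - G fhat‖ ^ 2 - (1 / ℓ) * ε ^ 2
        ≤ (inner ℝ (f - fhat) (G f - G fhat) : ℝ))
    (seq : ℕ → EuclideanSpace ℝ (Fin m))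
    (hseq : ∀ k, seq (k + 1) = P (seq k - η • G (seq k))) :
    ∀ K : ℕ, ∃ k ≤ K,
      ‖P (seq k - η • G (seq k)) - seq k‖ ^ 2
        ≤ 2 / ((K : ℝ) + 1) * ‖seq 0 - fhat‖ ^ 2 + 4 * ε ^ 2 / ℓ ^ 2 :=
  picard_defect_sublinear_general m Φ hΦ G ℓ ε hℓ η hηdef P hP fhat hfix hco seq hseq
end
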